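/- Let (Ω, P) be a probability space, b > 0, ν ≥ 0, and let R : Ω → ℕ be a random variable and (m_i)_{i∈ℕ} a sequence of real-valued random variables, each with P(m_i ≥ x) = 10^{−b x} for all x ≥ 0, such that the family (R, m_0, m_1, …) is mutually independent. Define R_ν(ω) = #{ i < R(ω) : m_i(ω) ≥ ν } and p(ν) = 10^{−b ν}. Then for every z ∈ [0,1], E[ z^{R_ν} ] = E[ (1 + p(ν)(z − 1))^{R} ]. -/

import Mathlib

/-!
Write `f(x) = z` if `ν ≤ x` and `f(x) = 1` otherwise, so that `z ^ R_ν = ∏_{i < R} f(m_i)`.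
The factors `f(m_i)` are independent with common mean `c = 1 + p(ν)(z - 1)`, hence
`E[∏_{i < n} f(m_i)] = c ^ n`; since they are also independent of `R`, conditioning on the
events `{R = n}` gives `E[∏_{i < R} f(m_i)] = E[c ^ R]`.
-/

open MeasureTheory ProbabilityTheory

section

variable {Ω : Type*} [MeasurableSpace Ω] {P : Measure Ω}

lemma integral_eq_tsum_setIntegral_fiber {α E : Type*} [MeasurableSpace α] [Countable α]
    [MeasurableSingletonClass α] [NormedAddCommGroup E] [NormedSpace ℝ E]
    {R : Ω → α} (hR : Measurable R) {H : Ω → E} (hH : Integrable H P) :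
    ∫ ω, H ω ∂P = ∑' a, ∫ ω in R ⁻¹' {a}, H ω ∂P := by
  have hcover : (⋃ a, R ⁻¹' {a}) = Set.univ := by
    rw [← Set.preimage_iUnion, Set.iUnion_of_singleton, Set.preimage_univ]
  rw [← integral_iUnion (fun a => hR (measurableSet_singleton a)) (pairwise_disjoint_fiber R)
    (by rw [hcover]; exact hH.integrableOn), hcover, Measure.restrict_univ]

lemma integral_ite_const [IsProbabilityMeasure P] {p : Ω → Prop} [DecidablePred p]
    (hp : MeasurableSet {ω | p ω}) (a b : ℝ) :
    ∫ ω, (if p ω then a else b) ∂P = b + P.real {ω | p ω} * (a - b) := by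
  have hsplit : (fun ω => if p ω then a else b)
      = fun ω => {ω | p ω}.indicator (fun _ => a - b) ω + b := by
    funext ω
    by_cases h : p ω <;> simp [h]
  rw [hsplit, integral_add ((integrable_const _).indicator hp) (integrable_const b),
    integral_indicator_const _ hp, integral_const, probReal_univ, smul_eq_mul, smul_eq_mul, one_mul,
    add_comm]

lemma ProbabilityTheory.iIndepFun.integral_finset_prod {ι : Type*} {Y : ι → Ω → ℝ}
    (hY : iIndepFun Y P) (hmeas : ∀ i, AEStronglyMeasurable (Y i) P) (s : Finset ι) :
    ∫ ω, ∏ i ∈ s, Y i ω ∂P = ∏ i ∈ s, ∫ ω, Y i ω ∂P := by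
  have hYs : iIndepFun (fun i : s => Y i) P := hY.precomp Subtype.val_injective
  simp_rw [← Finset.prod_coe_sort s]
  exact hYs.integral_fun_prod_eq_prod_integral fun i => hmeas i

theorem integral_apply_randomIndex_of_indepFun [IsProbabilityMeasure P] {R : Ω → ℕ}
    {G : ℕ → Ω → ℝ} {C : ℝ} (hR : Measurable R) (hG : ∀ n, Measurable (G n))
    (hGC : ∀ n ω, ‖G n ω‖ ≤ C) (hindep : ∀ n, IndepFun (G n) R P) :
    ∫ ω, G (R ω) ω ∂P = ∫ ω, ∫ ω', G (R ω) ω' ∂P ∂P := by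
  have hGR : Integrable (fun ω => G (R ω) ω) P := by
    have hjoint : Measurable fun q : Ω × ℕ => G q.2 q.1 :=
      measurable_from_prod_countable_left fun n => hG n
    exact .of_bound (hjoint.comp (measurable_id.prodMk hR)).aestronglyMeasurable C
      (.of_forall fun ω => hGC _ ω)
  have hmean : Integrable (fun ω => ∫ ω', G (R ω) ω' ∂P) P := by
    have hmeas : Measurable fun n => ∫ ω', G n ω' ∂P := .of_discrete
    refine .of_bound (hmeas.comp hR).aestronglyMeasurable C (.of_forall fun ω => ?_)
    simpa using norm_integral_le_of_norm_le_const (μ := P) (.of_forall (hGC (R ω)))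
  rw [integral_eq_tsum_setIntegral_fiber hR hGR, integral_eq_tsum_setIntegral_fiber hR hmean]
  refine tsum_congr fun n => ?_
  have hfiber : MeasurableSet[MeasurableSpace.comap R inferInstance] (R ⁻¹' {n}) :=
    ⟨_, measurableSet_singleton n, rfl⟩
  calc ∫ ω in R ⁻¹' {n}, G (R ω) ω ∂P
      = ∫ ω in R ⁻¹' {n}, G n ω ∂P :=
        setIntegral_congr_fun (hR (measurableSet_singleton n)) fun ω (hω : R ω = n) => by rw [hω]
    _ = P.real (R ⁻¹' {n}) * ∫ ω, G n ω ∂P :=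
        Indep.setIntegral_eq_mul (f := id) hR.comap_le
          ((IndepFun_iff_Indep _ _ _).1 (hindep n).symm) (hG n).aemeasurable hfiber
          aestronglyMeasurable_id
    _ = ∫ ω in R ⁻¹' {n}, ∫ ω', G (R ω) ω' ∂P ∂P := by
        rw [setIntegral_congr_fun (hR (measurableSet_singleton n))
          fun ω (hω : R ω = n) => by rw [hω], setIntegral_const, smul_eq_mul]

theorem integral_prod_range_randomIndex_eq_integral_pow [IsProbabilityMeasure P] {R : Ω → ℕ} {Y : ℕ → Ω → ℝ}
    (hR : Measurable R) (hY : ∀ i, Measurable (Y i)) (hY1 : ∀ i ω, ‖Y i ω‖ ≤ 1)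
    (hindep : iIndepFun (fun o : Option ℕ => o.elim (fun ω => (R ω : ℝ)) Y) P)
    {c : ℝ} (hc : ∀ i, ∫ ω, Y i ω ∂P = c) :
    ∫ ω, ∏ i ∈ Finset.range (R ω), Y i ω ∂P = ∫ ω, c ^ R ω ∂P := by
  have hmeas : ∀ o : Option ℕ, Measurable (o.elim (fun ω => (R ω : ℝ)) Y) := by
    rintro (_ | i)
    exacts [measurable_from_nat.comp hR, hY i]
  have hprod_indep : ∀ n, IndepFun (fun ω => ∏ i ∈ Finset.range n, Y i ω) R P := by
    intro n
    -- `⌊(R : ℝ)⌋₊ = R` recovers `R` from the real cast in `hindep`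
    have h := (hindep.indepFun_finsetProd_of_notMem hmeas
      (s := (Finset.range n).map .some) (i := none) (by simp)).comp measurable_id
      Nat.measurable_floor
    simpa [Function.comp_def, Finset.prod_map, Finset.prod_fn] using h
  have hprod_le : ∀ n ω, ‖∏ i ∈ Finset.range n, Y i ω‖ ≤ 1 := fun n ω => by
    rw [norm_prod]
    exact Finset.prod_le_one (fun i _ => norm_nonneg _) fun i _ => hY1 i ω
  rw [integral_apply_randomIndex_of_indepFun hR
    (fun n => Finset.measurable_prod _ fun i _ => hY i) hprod_le hprod_indep]
  have hYindep : iIndepFun Y P := hindep.precomp (g := some) (Option.some_injective ℕ)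
  congr 1 with ω
  rw [hYindep.integral_finset_prod fun i => (hY i).aestronglyMeasurable]
  simp only [hc, Finset.prod_const, Finset.card_range]

end

theorem thinned_offspring_pgf_substitution
    {Ω : Type*} [MeasurableSpace Ω] (P : Measure Ω) [IsProbabilityMeasure P]
    (b ν : ℝ) (hν : 0 ≤ ν)
    (R : Ω → ℕ) (hRmeas : Measurable R)
    (m : ℕ → Ω → ℝ) (hmmeas : ∀ i, Measurable (m i))
    (hlaw : ∀ i, ∀ x ≥ (0 : ℝ),
      P {ω | x ≤ m i ω} = ENNReal.ofReal ((10 : ℝ) ^ (-(b * x))))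
    (hindep : iIndepFun
      (fun o : Option ℕ => (match o with
        | none => fun ω => (R ω : ℝ)
        | some i => m i : Ω → ℝ)) P)
    (z : ℝ) (hz : z ∈ Set.Icc (0 : ℝ) 1) :
    ∫ ω, z ^ ((Finset.range (R ω)).filter (fun i => ν ≤ m i ω)).card ∂P
      = ∫ ω, (1 + (10 : ℝ) ^ (-(b * ν)) * (z - 1)) ^ (R ω) ∂P := by
  set f : ℝ → ℝ := fun x => if ν ≤ x then z else 1
  have hf : Measurable f :=
    Measurable.ite (measurableSet_le measurable_const measurable_id) measurable_const
      measurable_const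
  have hf_le : ∀ x, ‖f x‖ ≤ 1 := fun x => by
    dsimp only [f]
    split_ifs <;> simp [abs_of_nonneg hz.1, hz.2]
  have hthin_indep :
      iIndepFun (fun o : Option ℕ => o.elim (fun ω => (R ω : ℝ)) fun i ω => f (m i ω)) P := by
    convert hindep.comp (fun o : Option ℕ => o.elim id fun _ => f)
      (by rintro (_ | i); exacts [measurable_id, hf]) using 1
    funext o
    cases o <;> rfl
  have hthin_mean : ∀ i, ∫ ω, f (m i ω) ∂P = 1 + (10 : ℝ) ^ (-(b * ν)) * (z - 1) := fun i => by
    rw [integral_ite_const (measurableSet_le measurable_const (hmmeas i)), measureReal_def,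
      hlaw i ν hν, ENNReal.toReal_ofReal (by positivity)]
  calc ∫ ω, z ^ ((Finset.range (R ω)).filter (fun i => ν ≤ m i ω)).card ∂P
      = ∫ ω, ∏ i ∈ Finset.range (R ω), f (m i ω) ∂P := by
        simp_rw [← Finset.prod_const, Finset.prod_filter]
        rfl
    _ = _ := integral_prod_range_randomIndex_eq_integral_pow hRmeas (fun i => hf.comp (hmmeas i))
        (fun i ω => hf_le _) hthin_indep hthin_mean
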